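/- Let α ∈ (0, π/2), Δ = Δ(α) and let {T_t}_{t∈Δ} be a C₀-semigroup on a Banach space X. Then for every x ∈ X, the distributionally proximal cell DProx(T, x) = {y ∈ X : for every ε > 0, udens({t ∈ Δ : ‖T_t x − T_t y‖ < ε}) = 1} is a Gδ subset of X. -/

import Mathlib

open MeasureTheory Filter Set

noncomputable section

/-- The complex sector `Δ(α) = {r e^{iθ} : r ≥ 0, |θ| ≤ α}`. -/
def sector (α : ℝ) : Set ℂ := {z : ℂ | |Complex.arg z| ≤ α}

/-- `Δ_r = {t ∈ Δ(α) : |t| < r}`. -/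
def sectorBall (α r : ℝ) : Set ℂ := {z ∈ sector α | ‖z‖ < r}

/-- Upper density of a set `A` with respect to the sector `Δ(α)`. -/
def udens (α : ℝ) (A : Set ℂ) : ℝ :=
  limsup (fun r : ℝ =>
    (volume (A ∩ sectorBall α r)).toReal / (volume (sectorBall α r)).toReal) atTop

/-- Lower density of a set `A` with respect to the sector `Δ(α)`. -/
def ldens (α : ℝ) (A : Set ℂ) : ℝ :=
  liminf (fun r : ℝ =>
    (volume (A ∩ sectorBall α r)).toReal / (volume (sectorBall α r)).toReal) atTop

/-- The filter expressing `|t| → ∞` along `t ∈ A`. -/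
def alongAbs (A : Set ℂ) : Filter ℂ :=
  (atTop.comap (fun z : ℂ => ‖z‖)) ⊓ 𝓟 A

/-- A `C₀`-semigroup of continuous linear operators indexed by the sector `Δ(α)`. -/
structure CZeroSemigroup (α : ℝ) (𝕜 X : Type*) [NontriviallyNormedField 𝕜]
    [NormedAddCommGroup X] [NormedSpace 𝕜 X] where
  T : ℂ → X →L[𝕜] X
  map_zero' : T 0 = ContinuousLinearMap.id 𝕜 X
  map_add' : ∀ s ∈ sector α, ∀ t ∈ sector α, T (s + t) = (T s).comp (T t)
  cont' : ∀ x : X, ContinuousOn (fun t => T t x) (sector α)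

variable {α : ℝ} {𝕜 X : Type*} [NontriviallyNormedField 𝕜]
  [NormedAddCommGroup X] [NormedSpace 𝕜 X]

/-- Distributional sensitivity. -/
def DistSensitive (S : CZeroSemigroup α 𝕜 X) : Prop :=
  ∃ δ > (0:ℝ), ∀ x : X, ∀ ε > (0:ℝ), ∃ y : X, ‖x - y‖ < ε ∧
    udens α {t ∈ sector α | δ < ‖S.T t x - S.T t y‖} = 1

/-- Distributionally unbounded vector. -/
def DistUnbounded (S : CZeroSemigroup α 𝕜 X) (x : X) : Prop :=
  ∃ A : Set ℂ, A ⊆ sector α ∧ MeasurableSet A ∧ udens α A = 1 ∧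
    Tendsto (fun t => ‖S.T t x‖) (alongAbs A) atTop

/-- Distributionally semi-irregular vector. -/
def DistSemiIrregular (S : CZeroSemigroup α 𝕜 X) (x : X) : Prop :=
  ∃ A B : Set ℂ, A ⊆ sector α ∧ B ⊆ sector α ∧ MeasurableSet A ∧ MeasurableSet B ∧
    udens α A = 1 ∧ udens α B = 1 ∧
    Tendsto (fun t => ‖S.T t x‖) (alongAbs A) (nhds 0) ∧
    ∃ δ > (0:ℝ), ∀ t ∈ B, δ ≤ ‖S.T t x‖

/-- Distributionally irregular vector. -/
def DistIrregular (S : CZeroSemigroup α 𝕜 X) (x : X) : Prop :=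
  ∃ A B : Set ℂ, A ⊆ sector α ∧ B ⊆ sector α ∧ MeasurableSet A ∧ MeasurableSet B ∧
    udens α A = 1 ∧ udens α B = 1 ∧
    Tendsto (fun t => ‖S.T t x‖) (alongAbs A) (nhds 0) ∧
    Tendsto (fun t => ‖S.T t x‖) (alongAbs B) atTop

/-- Distributionally chaotic pair. -/
def DistChaoticPair (S : CZeroSemigroup α 𝕜 X) (x y : X) : Prop :=
  ∃ δ > (0:ℝ), ∀ ε > (0:ℝ),
    udens α {t ∈ sector α | ‖S.T t x - S.T t y‖ < ε} = 1 ∧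
    udens α {t ∈ sector α | δ < ‖S.T t x - S.T t y‖} = 1

/-- Distributionally scrambled set. -/
def DistScrambled (S : CZeroSemigroup α 𝕜 X) (K : Set X) : Prop :=
  ∀ x ∈ K, ∀ y ∈ K, x ≠ y → DistChaoticPair S x y

/-!
The cell is cut out by countably many conditions of the form "for arbitrarily large `r`, the
proportion of `Δ_r` on which `‖T_t x - T_t y‖ < 1/(n+1)` exceeds `1 - 1/(k+1)`". Each of these
is open in `y`: for fixed `t` the condition `‖T_t x - T_t y‖ < ε` is open in `y` because `T_t` is
continuous, and by continuity from below the measure of the set of such `t` is lower semicontinuous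
in `y`.
-/

open MeasureTheory Filter Set Topology
open scoped ENNReal

section LowerSemicontinuity

variable {Y : Type*} [TopologicalSpace Y]

theorem LowerSemicontinuous.ennreal_toReal {f : Y → ℝ≥0∞} (hf : LowerSemicontinuous f)
    (hf_ne_top : ∀ y, f y ≠ ∞) : LowerSemicontinuous fun y => (f y).toReal := by
  intro y c hc
  rcases lt_or_ge c 0 with hc₀ | hc₀
  · exact Eventually.of_forall fun _ => hc₀.trans_le ENNReal.toReal_nonneg
  · filter_upwards [hf y _ ((ENNReal.ofReal_lt_iff_lt_toReal hc₀ (hf_ne_top y)).2 hc)] with z hz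
    exact (ENNReal.ofReal_lt_iff_lt_toReal hc₀ (hf_ne_top z)).1 hz

theorem lowerSemicontinuous_measure_of_isOpen_setOf_mem [FirstCountableTopology Y]
    {β : Type*} [MeasurableSpace β] (μ : Measure β) {U : Y → Set β}
    (hU : ∀ t, IsOpen {y | t ∈ U y}) : LowerSemicontinuous fun y => μ (U y) := by
  intro y₀ c (hc : c < μ (U y₀))
  obtain ⟨u, hu⟩ := (𝓝 y₀).exists_antitone_basis
  set C : ℕ → Set β := fun n => {t ∈ U y₀ | ∀ y ∈ u n, t ∈ U y}
  have hC_mono : Monotone C := fun m n hmn t ht =>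
    ⟨ht.1, fun y hy => ht.2 y (hu.antitone hmn hy)⟩
  have hC_union : ⋃ n, C n = U y₀ := by
    refine Subset.antisymm (iUnion_subset fun n t ht => ht.1) fun t ht => ?_
    obtain ⟨n, hn⟩ := hu.mem_iff.1 ((hU t).mem_nhds ht)
    exact mem_iUnion.2 ⟨n, ht, hn⟩
  rw [← hC_union, hC_mono.measure_iUnion, lt_iSup_iff] at hc
  obtain ⟨n, hn⟩ := hc
  filter_upwards [hu.mem n] with y hy
  exact hn.trans_le (measure_mono fun t ht => ht.2 y hy)

theorem isGδ_setOf_frequently_atTop {p : Y → ℝ → Prop} (hp : ∀ r, IsOpen {y | p y r}) :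
    IsGδ {y | ∃ᶠ r in atTop, p y r} := by
  have h : {y | ∃ᶠ r in atTop, p y r} = ⋂ m : ℕ, ⋃ r ∈ Ici (m : ℝ), {y | p y r} := by
    ext y
    simp only [mem_ofPred_eq, mem_iInter, mem_iUnion, mem_Ici, exists_prop, frequently_atTop]
    refine ⟨fun h m => h m, fun h a => ?_⟩
    obtain ⟨r, hr, hpr⟩ := h ⌈a⌉₊
    exact ⟨r, (Nat.le_ceil a).trans hr, hpr⟩
  rw [h]
  exact .iInter fun m => (isOpen_biUnion fun r _ => hp r).isGδ

end LowerSemicontinuity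

section Density

def densityRatio (α : ℝ) (A : Set ℂ) (r : ℝ) : ℝ :=
  (volume (A ∩ sectorBall α r)).toReal / (volume (sectorBall α r)).toReal

theorem volume_sectorBall_lt_top (r : ℝ) : volume (sectorBall α r) < ∞ :=
  (measure_mono fun _ hz => mem_ball_zero_iff.2 hz.2).trans_lt measure_ball_lt_top

theorem volume_inter_sectorBall_ne_top (A : Set ℂ) (r : ℝ) :
    volume (A ∩ sectorBall α r) ≠ ∞ :=
  ((measure_mono inter_subset_right).trans_lt (volume_sectorBall_lt_top r)).ne

theorem densityRatio_nonneg (A : Set ℂ) (r : ℝ) : 0 ≤ densityRatio α A r := by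
  unfold densityRatio; positivity

theorem densityRatio_le_one (A : Set ℂ) (r : ℝ) : densityRatio α A r ≤ 1 :=
  div_le_one_of_le₀ (ENNReal.toReal_mono (volume_sectorBall_lt_top r).ne
    (measure_mono inter_subset_right)) ENNReal.toReal_nonneg

theorem densityRatio_mono {A B : Set ℂ} (h : A ⊆ B) (r : ℝ) :
    densityRatio α A r ≤ densityRatio α B r :=
  div_le_div_of_nonneg_right (ENNReal.toReal_mono (volume_inter_sectorBall_ne_top B r)
    (measure_mono (inter_subset_inter_left _ h))) ENNReal.toReal_nonneg

theorem udens_eq_one_iff (A : Set ℂ) :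
    udens α A = 1 ↔ ∀ k : ℕ, ∃ᶠ r in atTop, 1 - 1 / (k + 1 : ℝ) < densityRatio α A r := by
  have h_le : IsBoundedUnder (· ≤ ·) atTop (densityRatio α A) :=
    isBoundedUnder_of ⟨1, densityRatio_le_one A⟩
  have h_cobdd : IsCoboundedUnder (· ≤ ·) atTop (densityRatio α A) :=
    (isBoundedUnder_of ⟨0, densityRatio_nonneg A⟩).isCoboundedUnder_flip
  change limsup (densityRatio α A) atTop = 1 ↔ _
  constructor
  · intro h k
    refine frequently_lt_of_lt_limsup h_cobdd ?_
    rw [h]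
    exact sub_lt_self 1 Nat.one_div_pos_of_nat
  · intro h
    refine le_antisymm
      (limsup_le_of_le h_cobdd (Eventually.of_forall (densityRatio_le_one A))) ?_
    refine le_of_forall_sub_le fun η hη => ?_
    obtain ⟨k, hk⟩ := exists_nat_one_div_lt hη
    have := le_limsup_of_frequently_le ((h k).mono fun r hr => hr.le) h_le
    linarith

theorem udens_eq_one_of_subset {A B : Set ℂ} (h : A ⊆ B) (hA : udens α A = 1) :
    udens α B = 1 :=
  (udens_eq_one_iff B).2 fun k =>
    ((udens_eq_one_iff A).1 hA k).mono fun r hr => hr.trans_le (densityRatio_mono h r)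

end Density

section ProximalCell

variable {Y : Type*} [TopologicalSpace Y] [FirstCountableTopology Y]

theorem isOpen_setOf_lt_densityRatio {A : Y → Set ℂ} (hA : ∀ t, IsOpen {y | t ∈ A y})
    (c r : ℝ) : IsOpen {y | c < densityRatio α (A y) r} := by
  have h_lsc : LowerSemicontinuous fun y => (volume (A y ∩ sectorBall α r)).toReal :=
    (lowerSemicontinuous_measure_of_isOpen_setOf_mem volume fun t =>
      (hA t).inter isOpen_const).ennreal_toReal fun y => volume_inter_sectorBall_ne_top _ r
  rcases (ENNReal.toReal_nonneg (a := volume (sectorBall α r))).eq_or_lt with h₀ | hpos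
  · simp only [densityRatio, ← h₀, div_zero]
    exact isOpen_const
  · simp only [densityRatio, lt_div_iff₀ hpos]
    exact h_lsc.isOpen_preimage _

theorem isGδ_setOf_udens_eq_one {A : Y → Set ℂ} (hA : ∀ t, IsOpen {y | t ∈ A y}) :
    IsGδ {y | udens α (A y) = 1} := by
  simp only [udens_eq_one_iff, ofPred_forall]
  exact .iInter fun k => isGδ_setOf_frequently_atTop fun r => isOpen_setOf_lt_densityRatio hA _ r

theorem isGδ_setOf_forall_udens_eq_one {g : ℂ → Y → ℝ} (hg : ∀ t, Continuous (g t))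
    (s : Set ℂ) : IsGδ {y | ∀ ε > (0 : ℝ), udens α {t ∈ s | g t y < ε} = 1} := by
  have h : {y | ∀ ε > (0 : ℝ), udens α {t ∈ s | g t y < ε} = 1} =
      ⋂ n : ℕ, {y | udens α {t ∈ s | g t y < 1 / (n + 1)} = 1} := by
    ext y
    simp only [mem_ofPred_eq, mem_iInter]
    refine ⟨fun h n => h _ Nat.one_div_pos_of_nat, fun h ε hε => ?_⟩
    obtain ⟨n, hn⟩ := exists_nat_one_div_lt hε
    exact udens_eq_one_of_subset (fun t ht => ⟨ht.1, ht.2.trans hn⟩) (h n)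
  rw [h]
  exact .iInter fun n => isGδ_setOf_udens_eq_one fun t =>
    isOpen_const.inter (isOpen_lt (hg t) continuous_const)

end ProximalCell

theorem stmt_2_general (α : ℝ)
    {𝕜 X : Type*} [NontriviallyNormedField 𝕜] [NormedAddCommGroup X] [NormedSpace 𝕜 X]
    (S : CZeroSemigroup α 𝕜 X) (x : X) :
    IsGδ {y : X | ∀ ε > (0:ℝ),
      udens α {t ∈ sector α | ‖S.T t x - S.T t y‖ < ε} = 1} :=
  isGδ_setOf_forall_udens_eq_one (fun t => by fun_prop) (sector α)

/-- The distributionally proximal cell of every point is a `Gδ` subset of `X`. -/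
theorem stmt_2 (α : ℝ) (hα : 0 < α) (hα' : α < Real.pi / 2)
    {𝕜 X : Type*} [NontriviallyNormedField 𝕜] [NormedAddCommGroup X] [NormedSpace 𝕜 X]
    [CompleteSpace X] (S : CZeroSemigroup α 𝕜 X) (x : X) :
    IsGδ {y : X | ∀ ε > (0:ℝ),
      udens α {t ∈ sector α | ‖S.T t x - S.T t y‖ < ε} = 1} :=
  stmt_2_general α S x
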